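/- Let m(p) = f + gᵀp + (1/2)pᵀBp with B symmetric satisfying λ_min(B) ≥ λ₁ > 0 and ‖B‖ ≤ λ_n, and suppose p satisfies m(0) - m(p) ≥ τ(m(0) - m(p^C)) where p^C is the Cauchy point for radius Δ ≥ ‖p‖ and τ ∈ (0,1). If also ‖p‖ ≤ (2/λ₁)‖g‖, then m(0) - m(p) ≥ (1/2)ω‖p‖² where ω = τ min{λ₁/(2β), 1}(λ₁/2) and β = 1 + λ_n. -/

import Mathlib

open scoped RealInnerProductSpace

/-!
Since `‖p‖ ≤ (2/λ₁)‖g‖`, both `‖g‖` and `min {‖g‖/β, Δ}` are bounded below by multiples of `‖p‖`: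
`‖g‖ ≥ (λ₁/2)‖p‖` and `min {‖g‖/β, Δ} ≥ min {λ₁/(2β), 1} ‖p‖`. Multiplying, the Cauchy decrease
`(1/2)‖g‖ min {‖g‖/β, Δ}` dominates `(1/2) min {λ₁/(2β), 1} (λ₁/2) ‖p‖²`, and the fraction-of-Cauchy
decrease condition transfers this bound, scaled by `τ`, to `p`.
-/

section CauchyDecrease

variable {l1 β x G Δ : ℝ}

lemma half_mul_le_of_le_two_div_mul (hl1 : 0 < l1) (hx : x ≤ (2 / l1) * G) :
    l1 / 2 * x ≤ G := by
  calc l1 / 2 * x ≤ l1 / 2 * ((2 / l1) * G) := by gcongr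
    _ = G := by field_simp

lemma min_mul_le_min_div (hl1 : 0 < l1) (hβ : 0 < β) (hx0 : 0 ≤ x) (hxΔ : x ≤ Δ)
    (hx : x ≤ (2 / l1) * G) :
    min (l1 / (2 * β)) 1 * x ≤ min (G / β) Δ := by
  have hG := half_mul_le_of_le_two_div_mul hl1 hx
  apply le_min
  · calc min (l1 / (2 * β)) 1 * x ≤ l1 / (2 * β) * x := by gcongr; exact min_le_left _ _
      _ = l1 / 2 * x / β := by ring
      _ ≤ G / β := by gcongr
  · calc min (l1 / (2 * β)) 1 * x ≤ 1 * x := by gcongr; exact min_le_right _ _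
      _ ≤ Δ := by linarith

lemma sq_le_cauchy_decrease (hl1 : 0 < l1) (hβ : 0 < β) (hx0 : 0 ≤ x) (hxΔ : x ≤ Δ)
    (hx : x ≤ (2 / l1) * G) :
    (1 / 2) * (min (l1 / (2 * β)) 1 * (l1 / 2)) * x ^ 2 ≤ (1 / 2) * G * min (G / β) Δ := by
  have hG := half_mul_le_of_le_two_div_mul hl1 hx
  have hmin := min_mul_le_min_div hl1 hβ hx0 hxΔ hx
  calc (1 / 2) * (min (l1 / (2 * β)) 1 * (l1 / 2)) * x ^ 2
        = (1 / 2) * ((l1 / 2 * x) * (min (l1 / (2 * β)) 1 * x)) := by ring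
    _ ≤ (1 / 2) * (G * min (G / β) Δ) := by
        gcongr
        linarith [mul_nonneg hl1.le hx0]
    _ = (1 / 2) * G * min (G / β) Δ := by ring

end CauchyDecrease

theorem stmt_12_general (n : ℕ) (l1 ln τ Δ : ℝ)
    (hl1 : 0 < l1) (hln : l1 ≤ ln) (hτ0 : 0 < τ)
    (g : EuclideanSpace ℝ (Fin n))
    (m : EuclideanSpace ℝ (Fin n) → ℝ)
    (p pC : EuclideanSpace ℝ (Fin n)) (hpΔ : ‖p‖ ≤ Δ)
    (hCauchy : m 0 - m pC ≥ (1 / 2) * ‖g‖ * min (‖g‖ / (1 + ln)) Δ)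
    (hfrac : m 0 - m p ≥ τ * (m 0 - m pC))
    (hplen : ‖p‖ ≤ (2 / l1) * ‖g‖) :
    m 0 - m p ≥ (1 / 2) * (τ * min (l1 / (2 * (1 + ln))) 1 * (l1 / 2)) * ‖p‖ ^ 2 := by
  have hβ : 0 < 1 + ln := by linarith
  have hp := sq_le_cauchy_decrease hl1 hβ (norm_nonneg p) hpΔ hplen
  calc (1 / 2) * (τ * min (l1 / (2 * (1 + ln))) 1 * (l1 / 2)) * ‖p‖ ^ 2
        = τ * ((1 / 2) * (min (l1 / (2 * (1 + ln))) 1 * (l1 / 2)) * ‖p‖ ^ 2) := by ring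
    _ ≤ τ * (m 0 - m pC) := by gcongr; linarith
    _ ≤ m 0 - m p := hfrac

theorem stmt_12 (n : ℕ) (f l1 ln τ Δ : ℝ)
    (hl1 : 0 < l1) (hln : l1 ≤ ln) (hτ0 : 0 < τ) (hτ1 : τ < 1) (hΔ : 0 < Δ)
    (g : EuclideanSpace ℝ (Fin n)) (hg : g ≠ 0)
    (B : EuclideanSpace ℝ (Fin n) →L[ℝ] EuclideanSpace ℝ (Fin n))
    (hBsym : ∀ u v, ⟪B u, v⟫ = ⟪u, B v⟫)
    (hBlow : ∀ v, l1 * ‖v‖ ^ 2 ≤ ⟪v, B v⟫) (hBnorm : ‖B‖ ≤ ln)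
    (m : EuclideanSpace ℝ (Fin n) → ℝ)
    (hm : ∀ q, m q = f + ⟪g, q⟫ + (1 / 2) * ⟪q, B q⟫)
    (p pC : EuclideanSpace ℝ (Fin n)) (hpΔ : ‖p‖ ≤ Δ)
    (hCauchy : m 0 - m pC ≥ (1 / 2) * ‖g‖ * min (‖g‖ / (1 + ln)) Δ)
    (hfrac : m 0 - m p ≥ τ * (m 0 - m pC))
    (hplen : ‖p‖ ≤ (2 / l1) * ‖g‖) :
    m 0 - m p ≥ (1 / 2) * (τ * min (l1 / (2 * (1 + ln))) 1 * (l1 / 2)) * ‖p‖ ^ 2 :=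
  stmt_12_general n l1 ln τ Δ hl1 hln hτ0 g m p pC hpΔ hCauchy hfrac hplen
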